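/- (Theorem 1, with the marginal likelihood of S corrected.) Consider model selection between model 1: y_i i.i.d. Poisson(λ) with prior λ ~ Exponential(1), and model 2: y_i i.i.d. geometric 𝒢(p) with prior p ~ Uniform(0,1), when the observed data consist of i.i.d. integrable ℕ-valued random variables y_1, y_2, … with E[y_i] = θ_0 > 0. Let S_n = Σ_{i=1}^n y_i and let B_{12}^η(S_n) = (∫_0^∞ e^{-nλ}(nλ)^{S_n}/S_n! · e^{-λ} dλ) / (∫_0^1 C(n+S_n−1,S_n) p^{S_n}(1−p)^n dp) be the Bayes factor based on the sufficient statistic S_n. Then, almost surely, lim_{n→∞} B_{12}^η(S_n) = e^{-θ_0} (θ_0 + 1)^2. -/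

import Mathlib

open MeasureTheory Filter ProbabilityTheory
open scoped Nat Topology

/-!
Both marginal likelihoods of `S` are explicit: a Gamma integral gives `n^S / (n+1)^(S+1)` for the
Poisson model and a Beta integral gives `n / ((n+S)(n+S+1))` for the geometric model, so the Bayes
factor is `(n+S)(n+S+1) / (n(n+1))` divided by `(1 + 1/n)^S`. Along a path with `S/n → θ₀` (almost
every path, by the strong law) the rational factor tends to `(θ₀+1)²`, while
`(1 + 1/n)^S = exp ((S/n) · n log (1 + 1/n)) → e^θ₀`.
-/

theorem integral_pow_mul_one_sub_pow (a b : ℕ) :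
    ∫ p in (0 : ℝ)..1, p ^ a * (1 - p) ^ b = (a ! * b ! : ℝ) / (a + b + 1)! := by
  have hB := Complex.betaIntegral_eq_Gamma_mul_div (a + 1) (b + 1)
    (by simp; positivity) (by simp; positivity)
  rw [show (a + 1 + (b + 1) : ℂ) = ((a + b + 1 : ℕ) : ℂ) + 1 by push_cast; ring,
    Complex.Gamma_nat_eq_factorial, Complex.Gamma_nat_eq_factorial,
    Complex.Gamma_nat_eq_factorial, Complex.betaIntegral] at hB
  simp only [add_sub_cancel_right, Complex.cpow_natCast] at hB
  apply Complex.ofReal_injective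
  rw [← intervalIntegral.integral_ofReal]
  push_cast
  exact hB

theorem integral_pow_mul_exp_neg_mul_Ioi (k : ℕ) {r : ℝ} (hr : 0 < r) :
    ∫ x in Set.Ioi (0 : ℝ), x ^ k * Real.exp (-(r * x)) = k ! / r ^ (k + 1) := by
  have h := Real.integral_rpow_mul_exp_neg_mul_Ioi (a := k + 1) (by positivity) hr
  rw [add_sub_cancel_right, Real.Gamma_nat_eq_factorial] at h
  norm_cast at h
  rw [h, one_div_pow, one_div_mul_eq_div]

noncomputable def poissonMarginal (t : ℝ) (S : ℕ) : ℝ :=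
  ∫ lam in Set.Ioi (0 : ℝ), Real.exp (-(t * lam)) * (t * lam) ^ S / (S ! : ℝ) * Real.exp (-lam)

noncomputable def geometricMarginal (n S : ℕ) : ℝ :=
  ∫ p in (0 : ℝ)..1, (Nat.choose (n + S - 1) S : ℝ) * p ^ S * (1 - p) ^ n

theorem poissonMarginal_eq {t : ℝ} (ht : 0 < t + 1) (S : ℕ) :
    poissonMarginal t S = t ^ S / (t + 1) ^ (S + 1) := by
  have hintegrand : ∀ lam : ℝ,
      Real.exp (-(t * lam)) * (t * lam) ^ S / (S ! : ℝ) * Real.exp (-lam) =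
        t ^ S / S ! * (lam ^ S * Real.exp (-((t + 1) * lam))) := by
    intro lam
    rw [show -((t + 1) * lam) = -(t * lam) + -lam by ring, Real.exp_add]
    ring
  simp only [poissonMarginal, hintegrand, integral_const_mul,
    integral_pow_mul_exp_neg_mul_Ioi S ht]
  field_simp

theorem geometricMarginal_eq {n : ℕ} (hn : n ≠ 0) (S : ℕ) :
    geometricMarginal n S = n / ((n + S) * (n + S + 1)) := by
  obtain ⟨k, rfl⟩ := Nat.exists_eq_succ_of_ne_zero hn
  simp only [geometricMarginal, mul_assoc, intervalIntegral.integral_const_mul,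
    integral_pow_mul_one_sub_pow]
  rw [show k.succ + S - 1 = S + k by omega, Nat.cast_choose ℝ (Nat.le_add_right S k),
    Nat.add_sub_cancel_left, show S + k.succ + 1 = (S + k + 1) + 1 by omega,
    Nat.factorial_succ (S + k + 1), Nat.factorial_succ (S + k), Nat.factorial_succ k]
  push_cast
  field_simp
  ring

theorem poissonMarginal_div_geometricMarginal {n : ℕ} (hn : n ≠ 0) (S : ℕ) :
    poissonMarginal n S / geometricMarginal n S =
      (n + S) * (n + S + 1) / (n * (n + 1)) / (1 + 1 / (n : ℝ)) ^ S := by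
  have hn' : (n : ℝ) ≠ 0 := Nat.cast_ne_zero.mpr hn
  rw [poissonMarginal_eq (by positivity), geometricMarginal_eq hn,
    show 1 + 1 / (n : ℝ) = (n + 1) / n by field_simp, div_pow, pow_succ]
  field_simp

theorem tendsto_one_add_inv_pow_of_tendsto_div {s : ℕ → ℕ} {θ : ℝ}
    (h : Tendsto (fun n => (s n : ℝ) / n) atTop (𝓝 θ)) :
    Tendsto (fun n : ℕ => (1 + 1 / (n : ℝ)) ^ s n) atTop (𝓝 (Real.exp θ)) := by
  have hlog : Tendsto (fun n : ℕ => n * Real.log (1 + 1 / n)) atTop (𝓝 1) :=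
    (Real.tendsto_mul_log_one_add_div_atTop 1).comp tendsto_natCast_atTop_atTop
  have hexp := (Real.continuous_exp.tendsto θ).comp (mul_one θ ▸ h.mul hlog)
  refine hexp.congr' ?_
  filter_upwards [eventually_ne_atTop 0] with n hn
  have hn' : (n : ℝ) ≠ 0 := Nat.cast_ne_zero.mpr hn
  rw [Function.comp_apply, ← mul_assoc, div_mul_cancel₀ _ hn', ← Real.log_pow,
    Real.exp_log (by positivity)]

theorem tendsto_add_mul_add_add_one_div {s : ℕ → ℝ} {θ : ℝ}
    (h : Tendsto (fun n => s n / n) atTop (𝓝 θ)) :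
    Tendsto (fun n => (n + s n) * (n + s n + 1) / (n * (n + 1))) atTop (𝓝 ((θ + 1) ^ 2)) := by
  have hinv : Tendsto (fun n : ℕ => 1 / (n : ℝ)) atTop (𝓝 0) :=
    tendsto_one_div_atTop_nhds_zero_nat
  have hlim := (((h.add_const 1).mul ((h.add_const 1).add hinv)).div
    (tendsto_const_nhds.add hinv) (by norm_num : (1 : ℝ) + 0 ≠ 0))
  rw [add_zero, add_zero, div_one, ← sq] at hlim
  refine hlim.congr' ?_
  filter_upwards [eventually_ne_atTop 0] with n hn
  have hn' : (n : ℝ) ≠ 0 := Nat.cast_ne_zero.mpr hn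
  simp only [Pi.div_apply]
  field_simp
  ring

theorem tendsto_poissonMarginal_div_geometricMarginal {s : ℕ → ℕ} {θ : ℝ}
    (h : Tendsto (fun n : ℕ => (s n : ℝ) / n) atTop (𝓝 θ)) :
    Tendsto (fun n : ℕ => poissonMarginal n (s n) / geometricMarginal n (s n)) atTop
      (𝓝 (Real.exp (-θ) * (θ + 1) ^ 2)) := by
  have hlim := (tendsto_add_mul_add_add_one_div h).div
    (tendsto_one_add_inv_pow_of_tendsto_div h) (Real.exp_ne_zero θ)
  rw [Real.exp_neg, inv_mul_eq_div]
  refine hlim.congr' ?_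
  filter_upwards [eventually_ne_atTop 0] with n hn
  exact (poissonMarginal_div_geometricMarginal hn (s n)).symm

theorem strong_law_ae_nat {Ω : Type*} [MeasurableSpace Ω] (P : Measure Ω) (y : ℕ → Ω → ℕ)
    (hindep : Pairwise fun i j => IndepFun (y i) (y j) P)
    (hident : ∀ i, IdentDistrib (y i) (y 0) P P)
    (hint : Integrable (fun ω => (y 0 ω : ℝ)) P) :
    ∀ᵐ ω ∂P, Tendsto (fun n : ℕ => ((∑ i ∈ Finset.range n, y i ω : ℕ) : ℝ) / n) atTop
      (𝓝 (∫ ω, (y 0 ω : ℝ) ∂P)) := by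
  have hcast : Measurable (Nat.cast : ℕ → ℝ) := measurable_from_top
  filter_upwards [strong_law_ae_real (fun i ω => (y i ω : ℝ)) hint
    (fun i j hij => (hindep hij).comp hcast hcast) (fun i => (hident i).comp hcast)] with ω hω
  push_cast
  exact hω

theorem bayes_factor_sufficient_statistic_limit_general
    {Ω : Type*} [MeasurableSpace Ω] (P : Measure Ω)
    (y : ℕ → Ω → ℕ)
    (hindep : iIndepFun y P)
    (hident : ∀ i, IdentDistrib (y i) (y 0) P P)
    (hint : Integrable (fun ω => (y 0 ω : ℝ)) P)
    (θ₀ : ℝ) (hmean : ∫ ω, (y 0 ω : ℝ) ∂P = θ₀) :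
    ∀ᵐ ω ∂P,
      Tendsto
        (fun n : ℕ =>
          (∫ lam in Set.Ioi (0 : ℝ),
              Real.exp (-(n * lam)) * (n * lam) ^ (∑ i ∈ Finset.range n, y i ω) /
                (Nat.factorial (∑ i ∈ Finset.range n, y i ω) : ℝ) * Real.exp (-lam)) /
          (∫ p in (0 : ℝ)..1,
              (Nat.choose (n + (∑ i ∈ Finset.range n, y i ω) - 1)
                  (∑ i ∈ Finset.range n, y i ω) : ℝ) *
                p ^ (∑ i ∈ Finset.range n, y i ω) * (1 - p) ^ n))
        atTop (nhds (Real.exp (-θ₀) * (θ₀ + 1) ^ 2)) := by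
  filter_upwards [strong_law_ae_nat P y (fun i j hij => hindep.indepFun hij) hident hint]
    with ω hω
  rw [hmean] at hω
  exact tendsto_poissonMarginal_div_geometricMarginal hω

/-- Theorem 1 (with the marginal likelihood of S corrected): for i.i.d. integrable ℕ-valued
data with mean `θ₀ > 0`, the Bayes factor based on the sufficient statistic `Sₙ = Σᵢ yᵢ`,
between the Poisson model with Exponential(1) prior and the geometric model with
Uniform(0,1) prior, converges almost surely to `e^{-θ₀}(θ₀+1)²`. -/
theorem bayes_factor_sufficient_statistic_limit
    {Ω : Type*} [MeasurableSpace Ω] (P : Measure Ω) [IsProbabilityMeasure P]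
    (y : ℕ → Ω → ℕ)
    (hmeas : ∀ i, Measurable (y i))
    (hindep : iIndepFun y P)
    (hident : ∀ i, IdentDistrib (y i) (y 0) P P)
    (hint : Integrable (fun ω => (y 0 ω : ℝ)) P)
    (θ₀ : ℝ) (hθ₀ : 0 < θ₀) (hmean : ∫ ω, (y 0 ω : ℝ) ∂P = θ₀) :
    ∀ᵐ ω ∂P,
      Tendsto
        (fun n : ℕ =>
          (∫ lam in Set.Ioi (0 : ℝ),
              Real.exp (-(n * lam)) * (n * lam) ^ (∑ i ∈ Finset.range n, y i ω) /
                (Nat.factorial (∑ i ∈ Finset.range n, y i ω) : ℝ) * Real.exp (-lam)) /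
          (∫ p in (0 : ℝ)..1,
              (Nat.choose (n + (∑ i ∈ Finset.range n, y i ω) - 1)
                  (∑ i ∈ Finset.range n, y i ω) : ℝ) *
                p ^ (∑ i ∈ Finset.range n, y i ω) * (1 - p) ^ n))
        atTop (nhds (Real.exp (-θ₀) * (θ₀ + 1) ^ 2)) :=
  bayes_factor_sufficient_statistic_limit_general P y hindep hident hint θ₀ hmean
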